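/- arXiv:1306.5074 — 2 statements merged into one kernel-verified Lean document; each statement's English description precedes it below -/
import Mathlib

section
/- Let A ∈ ℂ^{m×n}, B1 ∈ ℂ^{m×k}, C2 ∈ ℂ^{l×n}, B3 ∈ ℂ^{m×k3}, C3 ∈ ℂ^{l3×n}, B4 ∈ ℂ^{m×k4}, C4 ∈ ℂ^{l4×n} be given, and for X1 ∈ ℂ^{k×n}, X2 ∈ ℂ^{m×l}, X3 ∈ ℂ^{k3×l3}, X4 ∈ ℂ^{k4×l4} set f2(X1,X2,X3,X4) = A − B1·X1 − X2·C2 − B3·X3·C3 − B4·X4·C4. Then the maximum of r(f2(X1,X2,X3,X4)) over all such X1, X2, X3, X4 equals min{ m, n, r([A B1; C2 0; C3 0; C4 0]), r([A B1 B3 B4; C2 0 0 0]), r([A B1 B3; C2 0 0; C4 0 0]), r([A B1 B4; C2 0 0; C3 0 0]) }. -/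
/-!
The upper bound holds because `f2` can be written as `A - B Y - Z C` for each grouping of its
terms into a left factor `[B1 B3 B4]`, `[B1 B3]`, ... and a right factor `[C2; C3; C4]`, ...,
and `r(A - B Y - Z C) ≤ r[A B; C 0]`.

For the lower bound, the basic fact is that `r(A - B X C)` reaches `min (r[A B]) (r[A; C])`:
while `r(A)` is smaller, some column `B u` lies outside the column space of `A` and some row
`vᵀ C` outside its row space, and `X = -u vᵀ` raises `r(A)` by one without changing `r[A B]` and
`r[A; C]`. For the two terms `B3 X3 C3 + B4 X4 C4` added to `M = [A B1; C2 0]`, one first picks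
`X3` optimal for the two one-term problems obtained by adjoining `B4` as columns or `C4` as rows
to `M`; a common optimum exists over an infinite field because along a line `X + t (Y - X)` a
nonzero minor vanishes for finitely many `t` only. Then `X4` is chosen optimally, and `X1`, `X2`
come from the one-term fact with an identity matrix as the missing factor.
-/

open Matrix

namespace Matrix

variable {F : Type*} [Field F] {m n k l : Type*}

theorem rank_sub_mul_le_rank_fromCols [Fintype n] [Fintype k] [DecidableEq n]
    (A : Matrix m n F) (B : Matrix m k F) (Y : Matrix k n F) :
    (A - B * Y).rank ≤ (fromCols A B).rank := by
  have h : A - B * Y = fromCols A B * fromRows (1 : Matrix n n F) (-Y) := by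
    rw [fromCols_mul_fromRows, Matrix.mul_one, Matrix.mul_neg, sub_eq_add_neg]
  exact h ▸ rank_mul_le_left _ _

theorem rank_sub_mul_le_rank_fromRows [Fintype m] [Fintype n] [Fintype l] [DecidableEq m]
    (A : Matrix m n F) (C : Matrix l n F) (Y : Matrix m l F) :
    (A - Y * C).rank ≤ (fromRows A C).rank := by
  have h : A - Y * C = fromCols (1 : Matrix m m F) (-Y) * fromRows A C := by
    rw [fromCols_mul_fromRows, Matrix.one_mul, Matrix.neg_mul, sub_eq_add_neg]
  exact h ▸ rank_mul_le_right _ _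

theorem rank_sub_mul_sub_mul_le [Fintype m] [Fintype n] [Fintype k] [Fintype l]
    [DecidableEq m] [DecidableEq n] (A : Matrix m n F) (B : Matrix m k F) (C : Matrix l n F)
    (Y : Matrix k n F) (Z : Matrix m l F) :
    (A - B * Y - Z * C).rank ≤ (fromBlocks A B C 0).rank :=
  calc (A - B * Y - Z * C).rank
    _ ≤ (fromRows (A - B * Y) C).rank := rank_sub_mul_le_rank_fromRows _ _ _
    _ = (fromRows A C - fromRows B 0 * Y).rank := by
      congr 1; ext (i | i) j <;> simp
    _ ≤ (fromBlocks A B C 0).rank := by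
      rw [← fromCols_fromRows_eq_fromBlocks]; exact rank_sub_mul_le_rank_fromCols _ _ _

theorem rank_fromCols_sub_mul [Fintype n] [Fintype k]
    (A : Matrix m n F) (B : Matrix m k F) (Y : Matrix k n F) :
    (fromCols (A - B * Y) B).rank = (fromCols A B).rank := by
  classical
  have h (A : Matrix m n F) (Y : Matrix k n F) : fromCols (A - B * Y) B =
      fromCols A B * fromBlocks (1 : Matrix n n F) 0 (-Y) (1 : Matrix k k F) := by
    rw [fromCols_mul_fromBlocks]; simp [sub_eq_add_neg]
  have h' := h (A - B * Y) (-Y)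
  rw [Matrix.mul_neg, sub_neg_eq_add, sub_add_cancel, neg_neg] at h'
  exact le_antisymm (h A Y ▸ rank_mul_le_left _ _) (h' ▸ rank_mul_le_left _ _)

theorem rank_fromRows_sub_mul [Fintype m] [Fintype n] [Fintype l]
    (A : Matrix m n F) (C : Matrix l n F) (Y : Matrix m l F) :
    (fromRows (A - Y * C) C).rank = (fromRows A C).rank := by
  simpa [← rank_transpose (fromRows _ _), transpose_fromRows, Matrix.transpose_mul] using
    rank_fromCols_sub_mul Aᵀ Cᵀ Yᵀ

theorem range_mulVecLin_fromCols [Fintype n] [Fintype k] (A : Matrix m n F) (B : Matrix m k F) :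
    LinearMap.range (fromCols A B).mulVecLin =
      LinearMap.range A.mulVecLin ⊔ LinearMap.range B.mulVecLin := by
  apply le_antisymm
  · rintro _ ⟨v, rfl⟩
    rw [mulVecLin_apply, fromCols_mulVec]
    exact Submodule.add_mem_sup ⟨_, rfl⟩ ⟨_, rfl⟩
  · refine sup_le ?_ ?_ <;> rintro _ ⟨v, rfl⟩
    · exact ⟨Sum.elim v 0, by simp⟩
    · exact ⟨Sum.elim 0 v, by simp⟩

theorem rank_lt_rank_fromCols_iff [Fintype m] [Fintype n] [Fintype k]
    {A : Matrix m n F} {B : Matrix m k F} :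
    A.rank < (fromCols A B).rank ↔ ∃ u, B *ᵥ u ∉ LinearMap.range A.mulVecLin := by
  rw [rank, rank, range_mulVecLin_fromCols]
  constructor
  · intro h
    by_contra! hB
    have hle : LinearMap.range B.mulVecLin ≤ LinearMap.range A.mulVecLin := by
      rintro _ ⟨u, rfl⟩; exact hB u
    rw [sup_eq_left.2 hle] at h
    exact lt_irrefl _ h
  · rintro ⟨u, hu⟩
    refine Submodule.finrank_lt_finrank_of_lt (lt_of_le_of_ne le_sup_left fun h => hu ?_)
    exact h ▸ Submodule.mem_sup_right ⟨u, rfl⟩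

theorem rank_le_rank_of_ker_le [Fintype n] {A : Matrix m n F} {B : Matrix l n F}
    (h : LinearMap.ker A.mulVecLin ≤ LinearMap.ker B.mulVecLin) : B.rank ≤ A.rank := by
  have hA := LinearMap.finrank_range_add_finrank_ker A.mulVecLin
  have hB := LinearMap.finrank_range_add_finrank_ker B.mulVecLin
  have := Submodule.finrank_mono h
  rw [rank, rank]
  omega

theorem rank_fromRows_le_rank_add_mul {d : Type*} [Fintype n] [Fintype d]
    (A : Matrix m n F) (B : Matrix m d F) (C : Matrix d n F)
    (hB : ∀ y, B *ᵥ y ∈ LinearMap.range A.mulVecLin → y = 0) :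
    (fromRows A C).rank ≤ (A + B * C).rank := by
  refine rank_le_rank_of_ker_le fun x hx => ?_
  rw [LinearMap.mem_ker, mulVecLin_apply, add_mulVec, ← mulVec_mulVec] at hx
  have hCx : C *ᵥ x = 0 := hB _ ⟨-x, by
    rwa [mulVecLin_apply, mulVec_neg, neg_eq_iff_add_eq_zero]⟩
  rw [hCx, mulVec_zero, add_zero] at hx
  rw [LinearMap.mem_ker, mulVecLin_apply, fromRows_mulVec, hx, hCx]
  ext (i | i) <;> rfl

theorem exists_rank_lt_rank_sub_mul_mul [Fintype m] [Fintype n] [Fintype k] [Fintype l]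
    {A : Matrix m n F} {B : Matrix m k F} {C : Matrix l n F}
    (h : A.rank < min (fromCols A B).rank (fromRows A C).rank) :
    ∃ X : Matrix k l F, A.rank < (A - B * X * C).rank := by
  obtain ⟨u, hu⟩ := rank_lt_rank_fromCols_iff.1 (h.trans_le (min_le_left _ _))
  obtain ⟨v, hv⟩ := (rank_lt_rank_fromCols_iff (A := Aᵀ) (B := Cᵀ)).1 (by
    rw [rank_transpose, ← transpose_fromRows, rank_transpose]
    exact h.trans_le (min_le_right _ _))
  refine ⟨-(replicateCol (Fin 1) u * replicateRow (Fin 1) v), ?_⟩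
  have hX : A - B * -(replicateCol (Fin 1) u * replicateRow (Fin 1) v) * C =
      A + replicateCol (Fin 1) (B *ᵥ u) * replicateRow (Fin 1) (Cᵀ *ᵥ v) := by
    rw [replicateCol_mulVec, mulVec_transpose, replicateRow_vecMul, Matrix.mul_neg,
      Matrix.neg_mul, sub_neg_eq_add, Matrix.mul_assoc, Matrix.mul_assoc, Matrix.mul_assoc]
  rw [hX]
  refine lt_of_lt_of_le ?_ (rank_fromRows_le_rank_add_mul _ _ _ fun y hy => ?_)
  · rw [← rank_transpose (fromRows _ _), transpose_fromRows, ← rank_transpose A]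
    refine rank_lt_rank_fromCols_iff.2 ⟨1, ?_⟩
    have : (replicateRow (Fin 1) (Cᵀ *ᵥ v))ᵀ *ᵥ 1 = Cᵀ *ᵥ v := by
      ext; simp [mulVec, dotProduct]
    rwa [this]
  · have hy' : replicateCol (Fin 1) (B *ᵥ u) *ᵥ y = y 0 • B *ᵥ u := by
      ext; simp [mulVec, dotProduct, mul_comm]
    ext i
    rw [Subsingleton.elim i 0]
    by_contra hy0
    refine hu ?_
    rw [← inv_smul_smul₀ hy0 (B *ᵥ u), ← hy']
    exact Submodule.smul_mem _ _ hy

theorem exists_min_le_rank_sub_mul_mul [Fintype m] [Fintype n] [Fintype k] [Fintype l]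
    (A : Matrix m n F) (B : Matrix m k F) (C : Matrix l n F) :
    ∃ X : Matrix k l F, min (fromCols A B).rank (fromRows A C).rank ≤ (A - B * X * C).rank := by
  suffices ∀ d (A : Matrix m n F), min (fromCols A B).rank (fromRows A C).rank - A.rank ≤ d →
      ∃ X : Matrix k l F, min (fromCols A B).rank (fromRows A C).rank ≤ (A - B * X * C).rank from
    this _ A le_rfl
  intro d
  induction d with
  | zero => exact fun A hA => ⟨0, by rw [Matrix.mul_zero, Matrix.zero_mul, sub_zero]; omega⟩
  | succ d ih =>
    intro A hA
    by_cases hle : min (fromCols A B).rank (fromRows A C).rank ≤ A.rank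
    · exact ⟨0, by simpa using hle⟩
    obtain ⟨X₀, hX₀⟩ := exists_rank_lt_rank_sub_mul_mul (not_le.1 hle)
    have hB : (fromCols (A - B * X₀ * C) B).rank = (fromCols A B).rank := by
      rw [Matrix.mul_assoc]; exact rank_fromCols_sub_mul A B _
    have hC : (fromRows (A - B * X₀ * C) C).rank = (fromRows A C).rank :=
      rank_fromRows_sub_mul A C _
    obtain ⟨X, hX⟩ := ih (A - B * X₀ * C) (by omega)
    refine ⟨X₀ + X, ?_⟩
    rwa [hB, hC, sub_sub, ← Matrix.add_mul, ← Matrix.mul_add] at hX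

theorem rank_fromRows_one [Fintype n] [DecidableEq n] (W : Matrix l n F) :
    (fromRows W (1 : Matrix n n F)).rank = Fintype.card n := by
  refine le_antisymm (rank_le_card_width _) ?_
  have h : (fromRows W (1 : Matrix n n F)).submatrix Sum.inr id = 1 := rfl
  simpa [h] using rank_submatrix_le (fromRows W (1 : Matrix n n F)) Sum.inr id

theorem rank_fromCols_one [Fintype m] [Fintype l] [DecidableEq m] (W : Matrix m l F) :
    (fromCols W (1 : Matrix m m F)).rank = Fintype.card m := by
  rw [← rank_transpose, transpose_fromCols, transpose_one, rank_fromRows_one]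

theorem exists_le_rank_sub_mul_sub_mul [Fintype m] [Fintype n] [Fintype k] [Fintype l]
    (A : Matrix m n F) (B : Matrix m k F) (C : Matrix l n F) :
    ∃ (Y : Matrix k n F) (Z : Matrix m l F),
      min (min (Fintype.card m) (Fintype.card n)) (fromBlocks A B C 0).rank ≤
        (A - B * Y - Z * C).rank := by
  classical
  obtain ⟨Y, hY⟩ :=
    exists_min_le_rank_sub_mul_mul (fromRows A C) (fromRows B 0) (1 : Matrix n n F)
  obtain ⟨Z, hZ⟩ := exists_min_le_rank_sub_mul_mul (A - B * Y) (1 : Matrix m m F) C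
  have hYC : fromRows A C - fromRows B 0 * Y * (1 : Matrix n n F) = fromRows (A - B * Y) C := by
    ext (i | i) j <;> simp
  rw [fromCols_fromRows_eq_fromBlocks, rank_fromRows_one, hYC] at hY
  rw [rank_fromCols_one, Matrix.one_mul] at hZ
  exact ⟨Y, Z, by omega⟩

theorem exists_linearIndependent_col_comp [Fintype n] (A : Matrix m n F) :
    ∃ g : Fin A.rank → n, LinearIndependent F (A.col ∘ g) := by
  obtain ⟨κ, a, ha, hspan, hli⟩ := exists_linearIndependent' F A.col
  have : Fintype κ := Fintype.ofInjective a ha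
  have hκ : Fintype.card κ = A.rank := by
    rw [rank_eq_finrank_span_cols, ← hspan, finrank_span_eq_card hli]
  let e : Fin A.rank ≃ κ := (Fintype.equivFinOfCardEq hκ).symm
  exact ⟨a ∘ e, hli.comp e e.injective⟩

theorem exists_submatrix_det_ne_zero [Fintype m] [Fintype n] (A : Matrix m n F) :
    ∃ (f : Fin A.rank → m) (g : Fin A.rank → n), (A.submatrix f g).det ≠ 0 := by
  obtain ⟨g, hg⟩ := exists_linearIndependent_col_comp A
  have hN : (A.submatrix id g)ᵀ.rank = A.rank := by
    rw [rank_transpose, ← rank_transpose]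
    exact hg.rank_matrix.trans (Fintype.card_fin _)
  obtain ⟨f, hf⟩ := exists_linearIndependent_col_comp (A.submatrix id g)ᵀ
  refine ⟨f ∘ Fin.cast hN.symm, g, ?_⟩
  have hrows : LinearIndependent F (A.submatrix (f ∘ Fin.cast hN.symm) g).row :=
    hf.comp _ (Fin.cast_injective _)
  exact ((isUnit_iff_isUnit_det _).1 (linearIndependent_rows_iff_isUnit.1 hrows)).ne_zero

open Polynomial in
theorem finite_setOf_det_add_smul_eq_zero [Fintype n] [DecidableEq n] {A B : Matrix n n F} {s : F}
    (hs : (A + s • B).det ≠ 0) : {t : F | (A + t • B).det = 0}.Finite := by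
  set p : F[X] := (A.map C + (X : F[X]) • B.map C).det
  have hp (t : F) : p.eval t = (A + t • B).det := by
    rw [← coe_evalRingHom, RingHom.map_det]
    congr 1
    ext i j
    simp only [RingHom.mapMatrix_apply, map_apply, add_apply, smul_apply, coe_evalRingHom,
      eval_add, eval_C, smul_eq_mul, eval_mul, eval_X]
  have hp0 : p ≠ 0 := fun h => hs (by rw [← hp, h, eval_zero])
  simpa only [IsRoot.def, hp] using finite_setOfPred_isRoot hp0

theorem finite_setOf_rank_add_smul_lt [Fintype m] [Fintype n] (A B : Matrix m n F) (s : F) :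
    {t : F | (A + t • B).rank < (A + s • B).rank}.Finite := by
  obtain ⟨f, g, hfg⟩ := exists_submatrix_det_ne_zero (A + s • B)
  have hsub (t : F) : (A + t • B).submatrix f g = A.submatrix f g + t • B.submatrix f g := rfl
  refine (finite_setOf_det_add_smul_eq_zero (hsub s ▸ hfg)).subset fun t ht => ?_
  by_contra hdet
  have h := rank_submatrix_le (A + t • B) f g
  rw [hsub, rank_of_det_ne_zero hdet, Fintype.card_fin] at h
  exact lt_irrefl _ (ht.trans_le h)

theorem sub_mul_add_smul_mul [Fintype k] [Fintype l] (A : Matrix m n F) (P : Matrix m k F)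
    (Q : Matrix l n F) (X D : Matrix k l F) (t : F) :
    A - P * (X + t • D) * Q = A - P * X * Q + t • -(P * D * Q) := by
  simp only [Matrix.mul_add, Matrix.add_mul, Matrix.mul_smul, Matrix.smul_mul, smul_neg]
  abel

theorem exists_le_rank_sub_mul_mul_and_le {m' n' : Type*} [Infinite F] [Fintype m] [Fintype n]
    [Fintype k] [Fintype l] [Fintype m'] [Fintype n']
    (A₁ : Matrix m n F) (P₁ : Matrix m k F) (Q₁ : Matrix l n F)
    (A₂ : Matrix m' n' F) (P₂ : Matrix m' k F) (Q₂ : Matrix l n' F) (X Y : Matrix k l F) :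
    ∃ Z : Matrix k l F, (A₁ - P₁ * X * Q₁).rank ≤ (A₁ - P₁ * Z * Q₁).rank ∧
      (A₂ - P₂ * Y * Q₂).rank ≤ (A₂ - P₂ * Z * Q₂).rank := by
  have hY : A₂ - P₂ * Y * Q₂ = A₂ - P₂ * X * Q₂ + (1 : F) • -(P₂ * (Y - X) * Q₂) := by
    rw [← sub_mul_add_smul_mul, one_smul, add_sub_cancel]
  obtain ⟨t, ht⟩ := ((finite_setOf_rank_add_smul_lt (A₁ - P₁ * X * Q₁) _ 0).union
    (finite_setOf_rank_add_smul_lt (A₂ - P₂ * X * Q₂) _ 1)).infinite_compl.nonempty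
  simp only [Set.mem_compl_iff, Set.mem_union, Set.mem_ofPred_eq, not_or, not_lt, zero_smul,
    add_zero] at ht
  rw [← hY] at ht
  exact ⟨X + t • (Y - X), by rw [sub_mul_add_smul_mul]; exact ht.1,
    by rw [sub_mul_add_smul_mul]; exact ht.2⟩

section Blocks

variable {k₁ l₁ k₂ l₂ : Type*}

theorem fromCols_sub_mul_mul [Fintype k₁] [Fintype l₁] (M : Matrix m n F) (P : Matrix m k₁ F)
    (X : Matrix k₁ l₁ F) (Q : Matrix l₁ n F) (P' : Matrix m k₂ F) :
    fromCols (M - P * X * Q) P' = fromCols M P' - P * X * fromCols Q 0 := by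
  ext i (j | j) <;> simp

theorem fromRows_sub_mul_mul [Fintype k₁] [Fintype l₁] (M : Matrix m n F) (P : Matrix m k₁ F)
    (X : Matrix k₁ l₁ F) (Q : Matrix l₁ n F) (Q' : Matrix l₂ n F) :
    fromRows (M - P * X * Q) Q' = fromRows M Q' - fromRows P 0 * X * Q := by
  ext (i | i) j <;> simp

theorem fromBlocks_sub_mul_mul [Fintype k₁] [Fintype l₁] (A : Matrix m n F) (P : Matrix m k₁ F)
    (X : Matrix k₁ l₁ F) (Q : Matrix l₁ n F) (B : Matrix m k F) (C : Matrix l n F) :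
    fromBlocks (A - P * X * Q) B C 0 = fromBlocks A B C 0 - fromRows P 0 * X * fromCols Q 0 := by
  rw [← fromRows_fromCols_eq_fromBlocks, fromCols_sub_mul_mul, fromRows_sub_mul_mul,
    fromRows_fromCols_eq_fromBlocks]

variable [Fintype n] [Fintype k₁] [Fintype k₂]

theorem rank_fromCols_fromCols_comm (M : Matrix m n F) (P₁ : Matrix m k₁ F)
    (P₂ : Matrix m k₂ F) :
    (fromCols (fromCols M P₂) P₁).rank = (fromCols M (fromCols P₁ P₂)).rank := by
  have h : fromCols (fromCols M P₂) P₁ = (fromCols M (fromCols P₁ P₂)).submatrix (Equiv.refl m)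
      ((Equiv.sumAssoc n k₂ k₁).trans (Equiv.sumCongr (Equiv.refl n) (Equiv.sumComm k₂ k₁))) := by
    ext i ((j | j) | j) <;> rfl
  rw [h, rank_submatrix]

theorem rank_fromRows_fromRows_comm [Fintype m] [Fintype l₁] [Fintype l₂]
    (M : Matrix m n F) (Q₁ : Matrix l₁ n F) (Q₂ : Matrix l₂ n F) :
    (fromRows (fromRows M Q₂) Q₁).rank = (fromRows M (fromRows Q₁ Q₂)).rank := by
  rw [← rank_transpose, ← rank_transpose (fromRows M _)]
  simp only [transpose_fromRows]
  exact rank_fromCols_fromCols_comm _ _ _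

theorem rank_fromBlocks_fromBlocks [Fintype k] (A : Matrix m n F) (B : Matrix m k F)
    (C : Matrix l n F) (B' : Matrix m k₂ F) (C' : Matrix l₂ n F) :
    (fromBlocks (fromBlocks A B C 0) (fromRows B' 0) (fromCols C' 0) 0).rank =
      (fromBlocks A (fromCols B B') (fromRows C C') 0).rank := by
  have h : fromBlocks (fromBlocks A B C 0) (fromRows B' 0) (fromCols C' 0) 0 =
      (fromBlocks A (fromCols B B') (fromRows C C') 0).submatrix (Equiv.sumAssoc m l l₂)
        (Equiv.sumAssoc n k k₂) := by
    ext ((i | i) | i) ((j | j) | j) <;> rfl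
  rw [h, rank_submatrix]

theorem rank_fromCols_fromBlocks [Fintype k] (A : Matrix m n F) (B : Matrix m k F)
    (C : Matrix l n F) (B' : Matrix m k₂ F) :
    (fromCols (fromBlocks A B C 0) (fromRows B' 0)).rank =
      (fromBlocks A (fromCols B B') C 0).rank := by
  have h : fromCols (fromBlocks A B C 0) (fromRows B' 0) =
      (fromBlocks A (fromCols B B') C 0).submatrix (Equiv.refl _) (Equiv.sumAssoc n k k₂) := by
    ext (i | i) ((j | j) | j) <;> rfl
  rw [h, rank_submatrix]

theorem rank_fromRows_fromBlocks [Fintype k] (A : Matrix m n F) (B : Matrix m k F)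
    (C : Matrix l n F) (C' : Matrix l₂ n F) :
    (fromRows (fromBlocks A B C 0) (fromCols C' 0)).rank =
      (fromBlocks A B (fromRows C C') 0).rank := by
  have h : fromRows (fromBlocks A B C 0) (fromCols C' 0) =
      (fromBlocks A B (fromRows C C') 0).submatrix (Equiv.sumAssoc m l l₂) (Equiv.refl _) := by
    ext ((i | i) | i) (j | j) <;> rfl
  rw [h, rank_submatrix]

end Blocks

section TwoTerms

variable {k₁ l₁ k₂ l₂ : Type*} [Fintype m] [Fintype n] [Fintype k₁] [Fintype l₁] [Fintype k₂]
  [Fintype l₂]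

/-- Over an infinite field, the maximal rank of `M - P₁ * X₁ * Q₁ - P₂ * X₂ * Q₂`. -/
noncomputable def maxRankSubMulMulSubMulMul (M : Matrix m n F) (P₁ : Matrix m k₁ F)
    (Q₁ : Matrix l₁ n F) (P₂ : Matrix m k₂ F) (Q₂ : Matrix l₂ n F) : ℕ :=
  min (min (fromRows M (fromRows Q₁ Q₂)).rank (fromCols M (fromCols P₁ P₂)).rank)
    (min (fromBlocks M P₁ Q₂ 0).rank (fromBlocks M P₂ Q₁ 0).rank)

variable (M : Matrix m n F) (P₁ : Matrix m k₁ F) (Q₁ : Matrix l₁ n F) (P₂ : Matrix m k₂ F)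
  (Q₂ : Matrix l₂ n F)

theorem rank_sub_mul_mul_sub_mul_mul_le (X₁ : Matrix k₁ l₁ F) (X₂ : Matrix k₂ l₂ F) :
    (M - P₁ * X₁ * Q₁ - P₂ * X₂ * Q₂).rank ≤ maxRankSubMulMulSubMulMul M P₁ Q₁ P₂ Q₂ := by
  classical
  have hrows : M - P₁ * X₁ * Q₁ - P₂ * X₂ * Q₂ =
      M - fromCols (P₁ * X₁) (P₂ * X₂) * fromRows Q₁ Q₂ := by
    rw [fromCols_mul_fromRows, sub_sub]
  have hcols : M - P₁ * X₁ * Q₁ - P₂ * X₂ * Q₂ =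
      M - fromCols P₁ P₂ * fromRows (X₁ * Q₁) (X₂ * Q₂) := by
    rw [fromCols_mul_fromRows, sub_sub, Matrix.mul_assoc, Matrix.mul_assoc]
  have h₁₂ : M - P₁ * X₁ * Q₁ - P₂ * X₂ * Q₂ = M - P₁ * (X₁ * Q₁) - P₂ * X₂ * Q₂ := by
    rw [Matrix.mul_assoc P₁]
  have h₂₁ : M - P₁ * X₁ * Q₁ - P₂ * X₂ * Q₂ = M - P₂ * (X₂ * Q₂) - P₁ * X₁ * Q₁ := by
    rw [sub_right_comm, Matrix.mul_assoc P₂]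
  refine le_min (le_min ?_ ?_) (le_min ?_ ?_)
  · exact hrows ▸ rank_sub_mul_le_rank_fromRows _ _ _
  · exact hcols ▸ rank_sub_mul_le_rank_fromCols _ _ _
  · exact h₁₂ ▸ rank_sub_mul_sub_mul_le _ _ _ _ _
  · exact h₂₁ ▸ rank_sub_mul_sub_mul_le _ _ _ _ _

theorem exists_maxRankSubMulMulSubMulMul_le_rank [Infinite F] :
    ∃ (X₁ : Matrix k₁ l₁ F) (X₂ : Matrix k₂ l₂ F),
      maxRankSubMulMulSubMulMul M P₁ Q₁ P₂ Q₂ ≤ (M - P₁ * X₁ * Q₁ - P₂ * X₂ * Q₂).rank := by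
  obtain ⟨Xa, ha⟩ := exists_min_le_rank_sub_mul_mul (fromCols M P₂) P₁
    (fromCols Q₁ (0 : Matrix l₁ k₂ F))
  obtain ⟨Xb, hb⟩ := exists_min_le_rank_sub_mul_mul (fromRows M Q₂)
    (fromRows P₁ (0 : Matrix l₂ k₁ F)) Q₁
  obtain ⟨X₁, ha₁, hb₁⟩ := exists_le_rank_sub_mul_mul_and_le (fromCols M P₂) P₁
    (fromCols Q₁ (0 : Matrix l₁ k₂ F)) (fromRows M Q₂) (fromRows P₁ (0 : Matrix l₂ k₁ F)) Q₁ Xa Xb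
  obtain ⟨X₂, h⟩ := exists_min_le_rank_sub_mul_mul (M - P₁ * X₁ * Q₁) P₂ Q₂
  rw [fromRows_fromCols_eq_fromBlocks, rank_fromCols_fromCols_comm] at ha
  rw [fromCols_fromRows_eq_fromBlocks, rank_fromRows_fromRows_comm] at hb
  rw [fromCols_sub_mul_mul, fromRows_sub_mul_mul] at h
  refine ⟨X₁, X₂, ?_⟩
  unfold maxRankSubMulMulSubMulMul
  omega

end TwoTerms

theorem maxRankSubMulMulSubMulMul_fromBlocks {k₁ l₁ k₂ l₂ : Type*} [Fintype n] [Fintype k]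
    [Fintype k₁] [Fintype k₂]
    (A : Matrix m n F) (B : Matrix m k F) (C : Matrix l n F) (P₁ : Matrix m k₁ F)
    (Q₁ : Matrix l₁ n F) (P₂ : Matrix m k₂ F) (Q₂ : Matrix l₂ n F) :
    maxRankSubMulMulSubMulMul (fromBlocks A B C 0) (fromRows P₁ 0) (fromCols Q₁ 0)
        (fromRows P₂ 0) (fromCols Q₂ 0) =
      min (min (fromBlocks A B (fromRows C (fromRows Q₁ Q₂)) 0).rank
          (fromBlocks A (fromCols B (fromCols P₁ P₂)) C 0).rank)
        (min (fromBlocks A (fromCols B P₁) (fromRows C Q₂) 0).rank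
          (fromBlocks A (fromCols B P₂) (fromRows C Q₁) 0).rank) := by
  have hQ : fromRows (fromCols Q₁ 0) (fromCols Q₂ 0) =
      fromCols (fromRows Q₁ Q₂) (0 : Matrix _ k F) := by
    rw [fromRows_fromCols_eq_fromBlocks, ← fromCols_fromRows_eq_fromBlocks, fromRows_zero]
  have hP : fromCols (fromRows P₁ 0) (fromRows P₂ 0) =
      fromRows (fromCols P₁ P₂) (0 : Matrix l _ F) := by
    rw [fromCols_fromRows_eq_fromBlocks, ← fromRows_fromCols_eq_fromBlocks, fromCols_zero]
  rw [maxRankSubMulMulSubMulMul, hQ, hP, rank_fromRows_fromBlocks, rank_fromCols_fromBlocks,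
    rank_fromBlocks_fromBlocks, rank_fromBlocks_fromBlocks]

section FourTerms

variable {k₃ l₃ k₄ l₄ : Type*} [Fintype m] [Fintype n] [Fintype k] [Fintype l] [Fintype k₃]
  [Fintype l₃] [Fintype k₄] [Fintype l₄] (A : Matrix m n F) (B₁ : Matrix m k F)
  (C₂ : Matrix l n F) (B₃ : Matrix m k₃ F) (C₃ : Matrix l₃ n F) (B₄ : Matrix m k₄ F)
  (C₄ : Matrix l₄ n F)

theorem rank_sub_mul_sub_mul_sub_mul_mul_sub_mul_mul_le (X₁ : Matrix k n F) (X₂ : Matrix m l F)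
    (X₃ : Matrix k₃ l₃ F) (X₄ : Matrix k₄ l₄ F) :
    (A - B₁ * X₁ - X₂ * C₂ - B₃ * X₃ * C₃ - B₄ * X₄ * C₄).rank ≤
      min (min (Fintype.card m) (Fintype.card n))
        (maxRankSubMulMulSubMulMul (fromBlocks A B₁ C₂ 0) (fromRows B₃ 0) (fromCols C₃ 0)
          (fromRows B₄ 0) (fromCols C₄ 0)) := by
  classical
  rw [show A - B₁ * X₁ - X₂ * C₂ - B₃ * X₃ * C₃ - B₄ * X₄ * C₄ =
    A - B₃ * X₃ * C₃ - B₄ * X₄ * C₄ - B₁ * X₁ - X₂ * C₂ by abel]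
  refine le_min (le_min (rank_le_card_height _) (rank_le_card_width _))
    ((rank_sub_mul_sub_mul_le _ _ _ _ _).trans ?_)
  rw [fromBlocks_sub_mul_mul, fromBlocks_sub_mul_mul]
  exact rank_sub_mul_mul_sub_mul_mul_le _ _ _ _ _ _ _

theorem isGreatest_rank_sub_mul_sub_mul_sub_mul_mul_sub_mul_mul [Infinite F] :
    IsGreatest {r : ℕ | ∃ (X₁ : Matrix k n F) (X₂ : Matrix m l F) (X₃ : Matrix k₃ l₃ F)
        (X₄ : Matrix k₄ l₄ F), r = (A - B₁ * X₁ - X₂ * C₂ - B₃ * X₃ * C₃ - B₄ * X₄ * C₄).rank}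
      (min (min (Fintype.card m) (Fintype.card n))
        (maxRankSubMulMulSubMulMul (fromBlocks A B₁ C₂ 0) (fromRows B₃ 0) (fromCols C₃ 0)
          (fromRows B₄ 0) (fromCols C₄ 0))) := by
  refine ⟨?_, fun r ⟨X₁, X₂, X₃, X₄, hr⟩ =>
    hr ▸ rank_sub_mul_sub_mul_sub_mul_mul_sub_mul_mul_le A B₁ C₂ B₃ C₃ B₄ C₄ X₁ X₂ X₃ X₄⟩
  obtain ⟨X₃, X₄, h₃₄⟩ := exists_maxRankSubMulMulSubMulMul_le_rank (fromBlocks A B₁ C₂ 0)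
    (fromRows B₃ 0) (fromCols C₃ 0) (fromRows B₄ 0) (fromCols C₄ 0)
  obtain ⟨X₁, X₂, h₁₂⟩ := exists_le_rank_sub_mul_sub_mul (A - B₃ * X₃ * C₃ - B₄ * X₄ * C₄) B₁ C₂
  rw [← fromBlocks_sub_mul_mul, ← fromBlocks_sub_mul_mul] at h₃₄
  refine ⟨X₁, X₂, X₃, X₄, le_antisymm ?_
    (rank_sub_mul_sub_mul_sub_mul_mul_sub_mul_mul_le A B₁ C₂ B₃ C₃ B₄ C₄ X₁ X₂ X₃ X₄)⟩
  rw [show A - B₁ * X₁ - X₂ * C₂ - B₃ * X₃ * C₃ - B₄ * X₄ * C₄ =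
    A - B₃ * X₃ * C₃ - B₄ * X₄ * C₄ - B₁ * X₁ - X₂ * C₂ by abel]
  omega

end FourTerms

end Matrix

/-- Maximal rank of `A - B1*X1 - X2*C2 - B3*X3*C3 - B4*X4*C4`. -/
theorem max_rank_f2 (m n k l k3 l3 k4 l4 : ℕ)
    (A : Matrix (Fin m) (Fin n) ℂ) (B1 : Matrix (Fin m) (Fin k) ℂ)
    (C2 : Matrix (Fin l) (Fin n) ℂ) (B3 : Matrix (Fin m) (Fin k3) ℂ)
    (C3 : Matrix (Fin l3) (Fin n) ℂ) (B4 : Matrix (Fin m) (Fin k4) ℂ)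
    (C4 : Matrix (Fin l4) (Fin n) ℂ) :
    IsGreatest {r : ℕ | ∃ (X1 : Matrix (Fin k) (Fin n) ℂ) (X2 : Matrix (Fin m) (Fin l) ℂ)
        (X3 : Matrix (Fin k3) (Fin l3) ℂ) (X4 : Matrix (Fin k4) (Fin l4) ℂ),
        r = (A - B1 * X1 - X2 * C2 - B3 * X3 * C3 - B4 * X4 * C4).rank}
      (min (min m n)
        (min (min (fromBlocks A B1 (fromRows C2 (fromRows C3 C4)) 0).rank
                  (fromBlocks A (fromCols B1 (fromCols B3 B4)) C2 0).rank)
             (min (fromBlocks A (fromCols B1 B3) (fromRows C2 C4) 0).rank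
                  (fromBlocks A (fromCols B1 B4) (fromRows C2 C3) 0).rank))) := by
  rw [← maxRankSubMulMulSubMulMul_fromBlocks]
  simpa only [Fintype.card_fin] using
    isGreatest_rank_sub_mul_sub_mul_sub_mul_mul_sub_mul_mul A B1 C2 B3 C3 B4 C4
end

section
/- Let A ∈ ℂ^{m×n}, B ∈ ℂ^{m×p1}, C ∈ ℂ^{m×p2}, D ∈ ℂ^{q1×n}, E ∈ ℂ^{q2×n} be given, and suppose the matrix equation B·X·D + C·Y·E = A has at least one solution (X, Y) with X ∈ ℂ^{p1×q1}, Y ∈ ℂ^{p2×q2}. Then the minimum of r(Y) over all pairs (X, Y) satisfying B·X·D + C·Y·E = A equals r([A B]) + r([A; D]) − r([A B; D 0]). -/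
/-!
Put `β = range B` and `Q = A (ker D)`. Then `r[A B] = dim (range A + β)`, `r[A; D] = r D + dim Q`
and `r[A B; D 0] = r D + dim (Q + β)`. For a solution, `N = C Y E` satisfies
`range A + β = range N + β` and `Q = N (ker D) ≤ range N`, so submodularity of `dim` bounds the
claimed value by `r N ≤ r Y`. Conversely, starting from a solution with `N₀ = C Y₀ E`, let
`p : ℂᵐ → range N₀ ∩ β` kill `Q` and invert `range N₀ ∩ β → ℂᵐ / Q` up to its kernel `Q ∩ β`.
Then `p ∘ N₀` can be moved into the `B X D` term, and `N = N₀ - p ∘ N₀` has rank at most the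
claimed value; generalized inverses of `C` and `E` then realize `N` as `C Y E` with `r Y ≤ r N`.
-/

open Matrix Submodule LinearMap Module

section LinearAlgebra

variable {K V W P R : Type*} [Field K]
  [AddCommGroup V] [Module K V] [AddCommGroup W] [Module K W]
  [AddCommGroup P] [Module K P] [AddCommGroup R] [Module K R]

theorem LinearMap.exists_comp_comp_eq_self (f : V →ₗ[K] W) :
    ∃ g : W →ₗ[K] V, f ∘ₗ g ∘ₗ f = f := by
  obtain ⟨r, hr⟩ := f.rangeRestrict.exists_rightInverse_of_surjective f.range_rangeRestrict
  obtain ⟨l, hl⟩ := (range f).subtype.exists_leftInverse_of_injective (range f).ker_subtype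
  refine ⟨r ∘ₗ l, LinearMap.ext fun v => ?_⟩
  have hl_v : l (f v) = f.rangeRestrict v := LinearMap.congr_fun hl (f.rangeRestrict v)
  have hr_v := congrArg Subtype.val (LinearMap.congr_fun hr (f.rangeRestrict v))
  simpa [hl_v] using hr_v

theorem Submodule.finrank_map_add_finrank_inf_ker [FiniteDimensional K V] (f : V →ₗ[K] W)
    (p : Submodule K V) : finrank K (p.map f) + finrank K (p ⊓ ker f : Submodule K V) =
      finrank K p := by
  have h := (f.domRestrict p).finrank_range_add_finrank_ker
  rwa [range_domRestrict, ker_domRestrict, ← p.finrank_map_subtype_eq,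
    map_comap_subtype] at h

theorem Submodule.finrank_map_add_finrank_le_of_le [FiniteDimensional K V] (f : V →ₗ[K] W)
    {p q : Submodule K V} (hpq : p ≤ q) :
    finrank K (q.map f) + finrank K p ≤ finrank K (p.map f) + finrank K q := by
  have hp := p.finrank_map_add_finrank_inf_ker f
  have hq := q.finrank_map_add_finrank_inf_ker f
  have : finrank K (p ⊓ ker f : Submodule K V) ≤ finrank K (q ⊓ ker f : Submodule K V) :=
    Submodule.finrank_mono (inf_le_inf_right _ hpq)
  omega

theorem Submodule.finrank_sup_add_finrank_le_of_le [FiniteDimensional K W]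
    {p q : Submodule K W} (hpq : p ≤ q) (r : Submodule K W) :
    finrank K (q ⊔ r : Submodule K W) + finrank K p ≤
      finrank K q + finrank K (p ⊔ r : Submodule K W) := by
  have hp := Submodule.finrank_sup_add_finrank_inf_eq p r
  have hq := Submodule.finrank_sup_add_finrank_inf_eq q r
  have : finrank K (p ⊓ r : Submodule K W) ≤ finrank K (q ⊓ r : Submodule K W) :=
    Submodule.finrank_mono (inf_le_inf_right _ hpq)
  omega

theorem LinearMap.finrank_range_comp_le_right [FiniteDimensional K W] (g : V →ₗ[K] W)
    (f : W →ₗ[K] P) :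
    finrank K (range (f ∘ₗ g)) ≤ finrank K (range g) := by
  rw [range_comp]
  exact Submodule.finrank_map_le f _

theorem LinearMap.finrank_range_comp_le_left [FiniteDimensional K P] (g : V →ₗ[K] W)
    (f : W →ₗ[K] P) :
    finrank K (range (f ∘ₗ g)) ≤ finrank K (range f) :=
  Submodule.finrank_mono (range_comp_le_range g f)

theorem LinearMap.exists_comp_comp_eq_of_range_le_of_ker_le [FiniteDimensional K W]
    [FiniteDimensional K P] (c : P →ₗ[K] W) (e : V →ₗ[K] R) {N : V →ₗ[K] W}
    (hc : range N ≤ range c) (he : ker e ≤ ker N) :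
    ∃ y : R →ₗ[K] P, c ∘ₗ y ∘ₗ e = N ∧ finrank K (range y) ≤ finrank K (range N) := by
  obtain ⟨c', hc'⟩ := c.exists_comp_comp_eq_self
  obtain ⟨e', he'⟩ := e.exists_comp_comp_eq_self
  have hc'u (u : P) : c (c' (c u)) = c u := LinearMap.congr_fun hc' u
  have he'v (v : V) : e (e' (e v)) = e v := LinearMap.congr_fun he' v
  refine ⟨c' ∘ₗ N ∘ₗ e', LinearMap.ext fun v => ?_, ?_⟩
  · have hNe : N (e' (e v)) = N v := by
      rw [← sub_eq_zero, ← map_sub]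
      exact he (by rw [LinearMap.mem_ker, map_sub, he'v, sub_self])
    obtain ⟨u, hu⟩ := hc ⟨e' (e v), rfl⟩
    simp only [LinearMap.comp_apply]
    rw [← hNe, ← hu, hc'u]
  · calc finrank K (range (c' ∘ₗ N ∘ₗ e')) ≤ finrank K (range (N ∘ₗ e')) :=
          finrank_range_comp_le_right _ _
      _ ≤ finrank K (range N) := finrank_range_comp_le_left _ _

theorem Submodule.exists_range_le_inf_le_ker_finrank_map_id_sub_le [FiniteDimensional K W]
    (Q M J : Submodule K W) :
    ∃ p : W →ₗ[K] W, range p ≤ M ⊓ J ∧ Q ≤ ker p ∧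
      finrank K (M.map (LinearMap.id - p)) + finrank K (M ⊓ J : Submodule K W) ≤
        finrank K M + finrank K (Q ⊓ J : Submodule K W) := by
  obtain ⟨g, hg⟩ := (Q.mkQ ∘ₗ (M ⊓ J).subtype).exists_comp_comp_eq_self
  set p := (M ⊓ J).subtype ∘ₗ g ∘ₗ Q.mkQ
  have hp_range : range p ≤ M ⊓ J := (range_comp_le_range _ _).trans (range_subtype _).le
  have hp_ker : Q ≤ ker p := fun w hw => by
    simp [p, (Submodule.Quotient.mk_eq_zero Q).2 hw]
  have hp_inf : (M ⊓ J).map (LinearMap.id - p) ≤ Q ⊓ J := by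
    rintro _ ⟨w, hw, rfl⟩
    have hpw : p w ∈ M ⊓ J := hp_range ⟨w, rfl⟩
    have hmk : Q.mkQ (p w) = Q.mkQ w := LinearMap.congr_fun hg ⟨w, hw⟩
    refine ⟨(Submodule.Quotient.mk_eq_zero Q).1 ?_, J.sub_mem hw.2 hpw.2⟩
    rw [LinearMap.sub_apply, LinearMap.id_apply, Submodule.Quotient.mk_sub, sub_eq_zero]
    exact hmk.symm
  refine ⟨p, hp_range, hp_ker, ?_⟩
  have := Submodule.finrank_map_add_finrank_le_of_le (LinearMap.id - p) (inf_le_left : M ⊓ J ≤ M)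
  have := Submodule.finrank_mono hp_inf
  omega

end LinearAlgebra

section LinearMapEquation

variable {K V W P₁ P₂ Q₁ Q₂ : Type*} [Field K]
  [AddCommGroup V] [Module K V] [AddCommGroup W] [Module K W]
  [AddCommGroup P₁] [Module K P₁] [AddCommGroup P₂] [Module K P₂]
  [AddCommGroup Q₁] [Module K Q₁] [AddCommGroup Q₂] [Module K Q₂]

theorem LinearMap.range_add_sup_eq_of_range_le {L : V →ₗ[K] W} (N : V →ₗ[K] W)
    {S : Submodule K W} (hL : range L ≤ S) : range (L + N) ⊔ S = range N ⊔ S := by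
  refine le_antisymm (sup_le ?_ le_sup_right) (sup_le ?_ le_sup_right)
  · rintro _ ⟨v, rfl⟩
    exact add_mem (mem_sup_right (hL (mem_range_self L v))) (mem_sup_left (mem_range_self N v))
  · rintro _ ⟨v, rfl⟩
    rw [← add_sub_cancel_left (L v) (N v)]
    exact sub_mem (mem_sup_left (mem_range_self (L + N) v))
      (mem_sup_right (hL (mem_range_self L v)))

theorem LinearMap.map_add_eq_of_le_ker {L : V →ₗ[K] W} (N : V →ₗ[K] W) {T : Submodule K V}
    (hL : T ≤ ker L) : T.map (L + N) = T.map N := by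
  ext w
  constructor <;> rintro ⟨v, hv, rfl⟩ <;> exact ⟨v, hv, by simp [mem_ker.1 (hL hv)]⟩

theorem finrank_sup_add_finrank_map_ker_le_of_add_eq [FiniteDimensional K W]
    {a N : V →ₗ[K] W} {b : P₁ →ₗ[K] W} {d : V →ₗ[K] Q₁} {x : Q₁ →ₗ[K] P₁}
    (h : b ∘ₗ x ∘ₗ d + N = a) :
    finrank K (range a ⊔ range b : Submodule K W) + finrank K ((ker d).map a) ≤
      finrank K (range N) + finrank K ((ker d).map a ⊔ range b : Submodule K W) := by
  subst h
  rw [range_add_sup_eq_of_range_le N (range_comp_le_range _ b),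
    map_add_eq_of_le_ker N ((ker_le_ker_comp d x).trans (ker_le_ker_comp _ b))]
  exact finrank_sup_add_finrank_le_of_le map_le_range _

theorem exists_add_eq_and_finrank_range_le [FiniteDimensional K W] [FiniteDimensional K P₁]
    [FiniteDimensional K P₂] {a : V →ₗ[K] W} {b : P₁ →ₗ[K] W} {c : P₂ →ₗ[K] W}
    {d : V →ₗ[K] Q₁} {e : V →ₗ[K] Q₂} {x₀ : Q₁ →ₗ[K] P₁} {y₀ : Q₂ →ₗ[K] P₂}
    (h₀ : b ∘ₗ x₀ ∘ₗ d + c ∘ₗ y₀ ∘ₗ e = a) :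
    ∃ (x : Q₁ →ₗ[K] P₁) (y : Q₂ →ₗ[K] P₂), b ∘ₗ x ∘ₗ d + c ∘ₗ y ∘ₗ e = a ∧
      finrank K (range y) + finrank K ((ker d).map a ⊔ range b : Submodule K W) ≤
        finrank K (range a ⊔ range b : Submodule K W) + finrank K ((ker d).map a) := by
  set m := c ∘ₗ y₀ ∘ₗ e
  have hQ : (ker d).map a = (ker d).map m := by
    rw [← h₀, map_add_eq_of_le_ker m ((ker_le_ker_comp d x₀).trans (ker_le_ker_comp _ b))]
  have hM : range a ⊔ range b = range m ⊔ range b := by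
    rw [← h₀, range_add_sup_eq_of_range_le m (range_comp_le_range _ b)]
  obtain ⟨p, hp_range, hp_ker, hp_rank⟩ :=
    Submodule.exists_range_le_inf_le_ker_finrank_map_id_sub_le ((ker d).map m) (range m) (range b)
  have hp_mem (w : W) : p w ∈ range m ⊓ range b := hp_range (mem_range_self p w)
  set N := (LinearMap.id - p) ∘ₗ m
  have hN_range : range N ≤ range c := by
    rintro _ ⟨v, rfl⟩
    have hm : range m ≤ range c := range_comp_le_range _ c
    exact sub_mem (hm (mem_range_self m v)) (hm (hp_mem (m v)).1)
  have hN_ker : ker e ≤ ker N := fun v hv => by simp [N, m, mem_ker.1 hv]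
  have hL_range : range (b ∘ₗ x₀ ∘ₗ d + p ∘ₗ m) ≤ range b := by
    rintro _ ⟨v, rfl⟩
    exact add_mem (mem_range_self b _) (hp_mem (m v)).2
  have hL_ker : ker d ≤ ker (b ∘ₗ x₀ ∘ₗ d + p ∘ₗ m) := fun v hv => by
    have hpm : p (m v) = 0 := hp_ker ⟨v, hv, rfl⟩
    simp [mem_ker.1 hv, hpm]
  obtain ⟨y, hy, hy_rank⟩ := c.exists_comp_comp_eq_of_range_le_of_ker_le e hN_range hN_ker
  obtain ⟨x, hx, -⟩ := b.exists_comp_comp_eq_of_range_le_of_ker_le d hL_range hL_ker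
  refine ⟨x, y, ?_, ?_⟩
  · rw [hx, hy, ← h₀]
    ext v
    simp [N]
  · have hN : range N = (range m).map (LinearMap.id - p) := range_comp _ _
    have := Submodule.finrank_sup_add_finrank_inf_eq (range m) (range b)
    have := Submodule.finrank_sup_add_finrank_inf_eq ((ker d).map m) (range b)
    rw [hN] at hy_rank
    rw [hQ, hM]
    omega

end LinearMapEquation

namespace Matrix

variable {R : Type*} {m m₁ m₂ n n₁ n₂ : Type*} [Fintype n] [Fintype n₁] [Fintype n₂]

theorem mulVecLin_fromCols [CommSemiring R] (A : Matrix m n₁ R) (B : Matrix m n₂ R) :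
    (fromCols A B).mulVecLin =
      A.mulVecLin.coprod B.mulVecLin ∘ₗ
        (LinearEquiv.sumArrowLequivProdArrow n₁ n₂ R R).toLinearMap :=
  LinearMap.ext (fromCols_mulVec A B)

theorem range_mulVecLin_fromCols_s13 [CommSemiring R] (A : Matrix m n₁ R) (B : Matrix m n₂ R) :
    range (fromCols A B).mulVecLin = range A.mulVecLin ⊔ range B.mulVecLin := by
  rw [mulVecLin_fromCols, range_comp_of_range_eq_top _ (LinearEquiv.range _), range_coprod]

theorem rank_fromCols {K : Type*} [Field K] [Fintype m] (A : Matrix m n₁ K) (B : Matrix m n₂ K) :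
    (fromCols A B).rank =
      finrank K (range A.mulVecLin ⊔ range B.mulVecLin : Submodule K (m → K)) := by
  rw [rank, range_mulVecLin_fromCols_s13]

theorem ker_mulVecLin_fromRows [CommSemiring R] (A : Matrix m₁ n R) (B : Matrix m₂ n R) :
    ker (fromRows A B).mulVecLin = ker A.mulVecLin ⊓ ker B.mulVecLin := by
  ext v
  simp [fromRows_mulVec, ← Sum.elim_zero_zero, Sum.elim_eq_iff]

variable {K : Type*} [Field K]

theorem rank_fromRows (A : Matrix m₁ n K) (B : Matrix m₂ n K) :
    (fromRows A B).rank = B.rank + finrank K ((ker B.mulVecLin).map A.mulVecLin) := by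
  have hAB := (fromRows A B).mulVecLin.finrank_range_add_finrank_ker
  have hB := B.mulVecLin.finrank_range_add_finrank_ker
  have hA := (ker B.mulVecLin).finrank_map_add_finrank_inf_ker A.mulVecLin
  rw [ker_mulVecLin_fromRows, inf_comm] at hAB
  rw [rank, rank]
  omega

theorem rank_fromBlocks_zero₂₂ (A : Matrix m₁ n₁ K) (B : Matrix m₁ n₂ K) (D : Matrix m₂ n₁ K) :
    (fromBlocks A B D 0).rank =
      D.rank +
        finrank K ((ker D.mulVecLin).map A.mulVecLin ⊔ range B.mulVecLin : Submodule K _) := by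
  rw [← fromRows_fromCols_eq_fromBlocks, rank_fromRows]
  congr 1
  · rw [rank, rank, range_mulVecLin_fromCols_s13, mulVecLin_zero, range_zero, sup_bot_eq]
  · rw [mulVecLin_fromCols, mulVecLin_fromCols, ker_comp, Submodule.map_comp,
      Submodule.map_comap_eq_of_surjective (LinearEquiv.surjective _),
      ker_coprod_of_disjoint_range _ _ (by simp), mulVecLin_zero, ker_zero, map_coprod_prod,
      Submodule.map_top]

end Matrix

section MatrixEquation

variable {K : Type*} [Field K] {l n p₁ p₂ q₁ q₂ : Type*} [Fintype n] [Fintype p₁] [Fintype p₂]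
  [Fintype q₁] [Fintype q₂]

theorem Matrix.mulVecLin_mul_mul_add_mul_mul (B : Matrix l p₁ K) (X : Matrix p₁ q₁ K)
    (D : Matrix q₁ n K) (C : Matrix l p₂ K) (Y : Matrix p₂ q₂ K) (E : Matrix q₂ n K) :
    (B * X * D + C * Y * E).mulVecLin =
      B.mulVecLin ∘ₗ X.mulVecLin ∘ₗ D.mulVecLin + C.mulVecLin ∘ₗ Y.mulVecLin ∘ₗ E.mulVecLin := by
  simp only [mulVecLin_add, mulVecLin_mul, LinearMap.comp_assoc]

theorem Matrix.finrank_sup_add_finrank_map_ker_le_rank_add [Fintype l] {A : Matrix l n K}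
    {B : Matrix l p₁ K} {C : Matrix l p₂ K} {D : Matrix q₁ n K} {E : Matrix q₂ n K}
    {X : Matrix p₁ q₁ K} {Y : Matrix p₂ q₂ K} (h : B * X * D + C * Y * E = A) :
    finrank K (range A.mulVecLin ⊔ range B.mulVecLin : Submodule K (l → K)) +
        finrank K ((ker D.mulVecLin).map A.mulVecLin) ≤
      Y.rank + finrank K ((ker D.mulVecLin).map A.mulVecLin ⊔ range B.mulVecLin :
        Submodule K (l → K)) := by
  have hCYE :
      B.mulVecLin ∘ₗ X.mulVecLin ∘ₗ D.mulVecLin + (C * Y * E).mulVecLin = A.mulVecLin := by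
    simp only [← h, mulVecLin_add, mulVecLin_mul, LinearMap.comp_assoc]
  refine (finrank_sup_add_finrank_map_ker_le_of_add_eq hCYE).trans ?_
  gcongr
  exact (rank_mul_le_left (C * Y) E).trans (rank_mul_le_right C Y)

theorem Matrix.exists_mul_mul_add_mul_mul_eq_and_rank_add_le [Fintype l] [DecidableEq n]
    [DecidableEq p₁] [DecidableEq p₂] [DecidableEq q₁] [DecidableEq q₂] {A : Matrix l n K}
    {B : Matrix l p₁ K} {C : Matrix l p₂ K} {D : Matrix q₁ n K} {E : Matrix q₂ n K}
    {X₀ : Matrix p₁ q₁ K} {Y₀ : Matrix p₂ q₂ K} (h₀ : B * X₀ * D + C * Y₀ * E = A) :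
    ∃ (X : Matrix p₁ q₁ K) (Y : Matrix p₂ q₂ K), B * X * D + C * Y * E = A ∧
      Y.rank + finrank K ((ker D.mulVecLin).map A.mulVecLin ⊔ range B.mulVecLin :
          Submodule K (l → K)) ≤
        finrank K (range A.mulVecLin ⊔ range B.mulVecLin : Submodule K (l → K)) +
          finrank K ((ker D.mulVecLin).map A.mulVecLin) := by
  obtain ⟨x, y, hxy, hy⟩ :=
    exists_add_eq_and_finrank_range_le (h₀ ▸ mulVecLin_mul_mul_add_mul_mul B X₀ D C Y₀ E).symm
  have hx : (toMatrix' x).mulVecLin = x := by rw [← toLin'_apply', toLin'_toMatrix']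
  have hy' : (toMatrix' y).mulVecLin = y := by rw [← toLin'_apply', toLin'_toMatrix']
  refine ⟨toMatrix' x, toMatrix' y, toLin'.injective ?_, by rwa [rank, hy']⟩
  rwa [toLin'_apply', toLin'_apply', mulVecLin_mul_mul_add_mul_mul, hx, hy']

end MatrixEquation

/-- Minimal rank of `Y` among the solutions of `B*X*D + C*Y*E = A`. -/
theorem min_rank_Y_solution (m n p1 p2 q1 q2 : ℕ)
    (A : Matrix (Fin m) (Fin n) ℂ) (B : Matrix (Fin m) (Fin p1) ℂ)
    (C : Matrix (Fin m) (Fin p2) ℂ) (D : Matrix (Fin q1) (Fin n) ℂ)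
    (E : Matrix (Fin q2) (Fin n) ℂ)
    (hcons : ∃ (X : Matrix (Fin p1) (Fin q1) ℂ) (Y : Matrix (Fin p2) (Fin q2) ℂ),
        B * X * D + C * Y * E = A) :
    IsLeast {r : ℤ | ∃ (X : Matrix (Fin p1) (Fin q1) ℂ) (Y : Matrix (Fin p2) (Fin q2) ℂ),
        B * X * D + C * Y * E = A ∧ r = (Y.rank : ℤ)}
      (((fromCols A B).rank : ℤ) + ((fromRows A D).rank : ℤ)
        - ((fromBlocks A B D 0).rank : ℤ)) := by
  rw [rank_fromCols, rank_fromRows, rank_fromBlocks_zero₂₂]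
  obtain ⟨X₀, Y₀, h₀⟩ := hcons
  obtain ⟨X, Y, hXY, hY⟩ := exists_mul_mul_add_mul_mul_eq_and_rank_add_le h₀
  have hY' := finrank_sup_add_finrank_map_ker_le_rank_add hXY
  refine ⟨⟨X, Y, hXY, by omega⟩, ?_⟩
  rintro _ ⟨X', Y', hXY', rfl⟩
  have := finrank_sup_add_finrank_map_ker_le_rank_add hXY'
  omega
end
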